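/- arXiv:0710.0800 — 2 statements merged into one kernel-verified Lean document; each statement's English description precedes it below -/
import Mathlib

section
/- Finite-volume upper bound for the pressure: for any positive integers N1, N2 with N = N1 + N2, setting α = N1/N, one has p_N ≤ (1/N)·log(N1+1) + (1/N)·log(N2+1) + sup_{(μ1,μ2) ∈ [−1,1]²} p_UP(μ1, μ2). -/
open Real Filter

noncomputable def spin (b : Bool) : ℝ := if b then 1 else -1

/-- The Hamiltonian of the bipartite mean field model: the first `N1` sites form
block `A`, the remaining `N2` sites form block `B`. -/
noncomputable def ham (J11 J12 J22 h1 h2 : ℝ) (N1 N2 : ℕ)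
    (σ : Fin (N1 + N2) → Bool) : ℝ :=
  -(1 / (2 * ((N1 + N2 : ℕ) : ℝ))) *
      (J11 * ∑ i : Fin (N1 + N2), ∑ j : Fin (N1 + N2),
          (if (i : ℕ) < N1 ∧ (j : ℕ) < N1 then spin (σ i) * spin (σ j) else 0)
        + 2 * J12 * ∑ i : Fin (N1 + N2), ∑ j : Fin (N1 + N2),
          (if (i : ℕ) < N1 ∧ N1 ≤ (j : ℕ) then spin (σ i) * spin (σ j) else 0)
        + J22 * ∑ i : Fin (N1 + N2), ∑ j : Fin (N1 + N2),
          (if N1 ≤ (i : ℕ) ∧ N1 ≤ (j : ℕ) then spin (σ i) * spin (σ j) else 0))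
    - h1 * ∑ i : Fin (N1 + N2), (if (i : ℕ) < N1 then spin (σ i) else 0)
    - h2 * ∑ i : Fin (N1 + N2), (if N1 ≤ (i : ℕ) then spin (σ i) else 0)

/-- The pressure per particle `p_N = (1/N) log Σ_σ exp(-H_N(σ))`. -/
noncomputable def pressure (J11 J12 J22 h1 h2 : ℝ) (N1 N2 : ℕ) : ℝ :=
  (1 / ((N1 + N2 : ℕ) : ℝ)) *
    Real.log (∑ σ : Fin (N1 + N2) → Bool,
      Real.exp (-(ham J11 J12 J22 h1 h2 N1 N2 σ)))

/-- The upper-bound variational functional `p_UP`. -/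
noncomputable def pUP (J11 J12 J22 h1 h2 α μ1 μ2 : ℝ) : ℝ :=
  Real.log 2
    - (1 / 2) * (J11 * α ^ 2 * μ1 ^ 2 + 2 * J12 * α * (1 - α) * μ1 * μ2
        + J22 * (1 - α) ^ 2 * μ2 ^ 2)
    + α * Real.log (Real.cosh (J11 * α * μ1 + J12 * (1 - α) * μ2 + h1))
    + (1 - α) * Real.log (Real.cosh (J12 * α * μ1 + J22 * (1 - α) * μ2 + h2))

/-!
Write `-H_N` through the block magnetizations `m_A = Σ_{i∈A} ξ_i` and `m_B = Σ_{j∈B} η_j`.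
On the configurations with `m_A = N1 μ1`, `m_B = N2 μ2` the quadratic part of `-H_N` agrees
with its linearization at `(μ1, μ2)`, so `-H_N = C + a m_A + b m_B` there. Extending the sum
of this product weight to all configurations gives `exp C (2 cosh a)^N1 (2 cosh b)^N2`,
which is `exp (N p_UP(μ1, μ2))`. There are at most `(N1+1)(N2+1)` such fibers, and every
`(μ1, μ2)` that occurs lies in `[-1,1]²`.
-/

open Finset

theorem sum_spin_eq_two_mul_card_sub_card {ι : Type*} (σ : ι → Bool) (s : Finset ι) :
    ∑ i ∈ s, spin (σ i) = 2 * #{i ∈ s | σ i = true} - #s := by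
  have h : ∀ i, spin (σ i) = 2 * (if σ i = true then 1 else 0) - 1 := by
    intro i; cases σ i <;> norm_num [spin]
  simp only [h, sum_sub_distrib, ← mul_sum, sum_boole, sum_const, nsmul_eq_mul, mul_one]

theorem sum_exp_sum_mul_spin {ι : Type*} [Fintype ι] [DecidableEq ι] (c : ι → ℝ) :
    ∑ σ : ι → Bool, exp (∑ i, c i * spin (σ i)) = ∏ i, 2 * cosh (c i) := by
  simp_rw [exp_sum]
  rw [← Fintype.prod_sum fun i (s : Bool) => exp (c i * spin s)]
  refine prod_congr rfl fun i _ => ?_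
  rw [Fintype.sum_bool, cosh_eq]
  simp only [spin, if_true, Bool.false_eq_true, if_false]
  ring_nf

theorem sum_sum_ite_and_mul {ι R : Type*} [Fintype ι] [CommSemiring R]
    (P Q : ι → Prop) [DecidablePred P] [DecidablePred Q] (f : ι → R) :
    ∑ i, ∑ j, (if P i ∧ Q j then f i * f j else 0) =
      (∑ i, if P i then f i else 0) * ∑ j, if Q j then f j else 0 := by
  simp_rw [sum_mul_sum, ite_zero_mul_ite_zero]

namespace BipartiteMeanField

variable (N1 N2 : ℕ)

def blockA : Finset (Fin (N1 + N2)) := {i | (i : ℕ) < N1}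

def blockB : Finset (Fin (N1 + N2)) := {i | N1 ≤ (i : ℕ)}

theorem card_blockA : #(blockA N1 N2) = N1 := by
  rw [blockA, Fin.card_filter_val_lt]; omega

theorem card_blockB : #(blockB N1 N2) = N2 := by
  have h := card_filter_add_card_filter_not (s := (univ : Finset (Fin (N1 + N2))))
    (fun i => (i : ℕ) < N1)
  simp only [not_lt, card_univ, Fintype.card_fin] at h
  rw [← blockA, ← blockB, card_blockA] at h
  omega

variable {N1 N2}

noncomputable def magA (σ : Fin (N1 + N2) → Bool) : ℝ := ∑ i ∈ blockA N1 N2, spin (σ i)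

noncomputable def magB (σ : Fin (N1 + N2) → Bool) : ℝ := ∑ i ∈ blockB N1 N2, spin (σ i)

theorem ham_eq_magA_magB (J11 J12 J22 h1 h2 : ℝ) (σ : Fin (N1 + N2) → Bool) :
    ham J11 J12 J22 h1 h2 N1 N2 σ =
      -(1 / (2 * ((N1 + N2 : ℕ) : ℝ))) *
          (J11 * magA σ ^ 2 + 2 * J12 * (magA σ * magB σ) + J22 * magB σ ^ 2)
        - h1 * magA σ - h2 * magB σ := by
  rw [ham, sum_sum_ite_and_mul, sum_sum_ite_and_mul, sum_sum_ite_and_mul]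
  simp only [magA, magB, blockA, blockB, sum_filter, sq]

theorem sum_exp_magA_magB (a b : ℝ) :
    ∑ σ : Fin (N1 + N2) → Bool, exp (a * magA σ + b * magB σ) =
      (2 * cosh a) ^ N1 * (2 * cosh b) ^ N2 := by
  have h : ∀ σ : Fin (N1 + N2) → Bool, a * magA σ + b * magB σ =
      ∑ i : Fin (N1 + N2), (if (i : ℕ) < N1 then a else b) * spin (σ i) := by
    intro σ
    simp only [magA, magB, blockA, blockB, sum_filter, mul_sum, ← sum_add_distrib]
    refine sum_congr rfl fun i _ => ?_
    by_cases hi : (i : ℕ) < N1 <;> simp [hi, le_of_not_gt]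
  simp_rw [h, sum_exp_sum_mul_spin, apply_ite cosh, mul_ite, prod_ite, prod_const]
  rw [← blockA, card_blockA]
  simp only [not_lt]
  rw [← blockB, card_blockB]

variable (J11 J12 J22 h1 h2 : ℝ)

theorem sum_exp_neg_ham_le_of_magnetization (hN : 0 < N1 + N2)
    (s : Finset (Fin (N1 + N2) → Bool)) (μ1 μ2 : ℝ)
    (hs : ∀ σ ∈ s, magA σ = N1 * μ1 ∧ magB σ = N2 * μ2) :
    ∑ σ ∈ s, exp (-ham J11 J12 J22 h1 h2 N1 N2 σ) ≤
      exp ((N1 + N2 : ℕ) * pUP J11 J12 J22 h1 h2 (N1 / (N1 + N2 : ℕ)) μ1 μ2) := by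
  set N : ℝ := ((N1 + N2 : ℕ) : ℝ)
  set α : ℝ := N1 / N
  have hN0 : N ≠ 0 := by positivity
  have hN1 : (N1 : ℝ) = N * α := (mul_div_cancel₀ _ hN0).symm
  have hN2 : (N2 : ℝ) = N * (1 - α) := by simp only [N, α]; field_simp; push_cast; ring
  set a := J11 * α * μ1 + J12 * (1 - α) * μ2 + h1
  set b := J12 * α * μ1 + J22 * (1 - α) * μ2 + h2
  set C := -(N / 2) * (J11 * α ^ 2 * μ1 ^ 2 + 2 * J12 * α * (1 - α) * μ1 * μ2
    + J22 * (1 - α) ^ 2 * μ2 ^ 2)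
  -- On the fiber the quadratic form equals its linearization at `(μ1, μ2)`.
  have hlin : ∀ σ ∈ s, -ham J11 J12 J22 h1 h2 N1 N2 σ = C + (a * magA σ + b * magB σ) := by
    intro σ hσ
    rw [ham_eq_magA_magB, (hs σ hσ).1, (hs σ hσ).2, hN1, hN2]
    field_simp
    ring
  have hpow : ∀ (x : ℝ) (n : ℕ), (2 * cosh x) ^ n = exp (n * (log 2 + log (cosh x))) := by
    intro x n
    rw [exp_nat_mul, ← log_mul two_ne_zero (cosh_pos x).ne', exp_log (by positivity)]
  calc ∑ σ ∈ s, exp (-ham J11 J12 J22 h1 h2 N1 N2 σ)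
      = ∑ σ ∈ s, exp (C + (a * magA σ + b * magB σ)) := sum_congr rfl fun σ hσ => by
        rw [hlin σ hσ]
    _ ≤ ∑ σ, exp (C + (a * magA σ + b * magB σ)) :=
        sum_le_univ_sum_of_nonneg fun _ => (exp_pos _).le
    _ = exp C * ((2 * cosh a) ^ N1 * (2 * cosh b) ^ N2) := by
        simp_rw [exp_add C, ← mul_sum, sum_exp_magA_magB]
    _ = exp (N * pUP J11 J12 J22 h1 h2 α μ1 μ2) := by
        rw [hpow, hpow, ← exp_add, ← exp_add, hN1, hN2, pUP]
        congr 1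
        ring

theorem two_mul_sub_div_mem_Icc {k n : ℕ} (hn : 0 < n) (hk : k ≤ n) :
    (2 * k - n : ℝ) / n ∈ Set.Icc (-1) 1 := by
  have hn' : (0 : ℝ) < n := by exact_mod_cast hn
  have hk' : (k : ℝ) ≤ n := by exact_mod_cast hk
  rw [Set.mem_Icc, le_div_iff₀ hn', div_le_one hn']
  constructor <;> linarith [(k.cast_nonneg : (0 : ℝ) ≤ k)]

theorem sum_exp_neg_ham_le (hN1 : 0 < N1) (hN2 : 0 < N2) {S : ℝ}
    (hS : ∀ μ1 ∈ Set.Icc (-1 : ℝ) 1, ∀ μ2 ∈ Set.Icc (-1 : ℝ) 1,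
      pUP J11 J12 J22 h1 h2 (N1 / (N1 + N2 : ℕ)) μ1 μ2 ≤ S) :
    ∑ σ, exp (-ham J11 J12 J22 h1 h2 N1 N2 σ) ≤
      (N1 + 1) * (N2 + 1) * exp ((N1 + N2 : ℕ) * S) := by
  let count (σ : Fin (N1 + N2) → Bool) : ℕ × ℕ :=
    (#{i ∈ blockA N1 N2 | σ i = true}, #{i ∈ blockB N1 N2 | σ i = true})
  have hcount : ∀ σ ∈ univ, count σ ∈ range (N1 + 1) ×ˢ range (N2 + 1) := by
    intro σ _
    simp only [count, mem_product, mem_range, Nat.lt_succ_iff]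
    exact ⟨(card_filter_le _ _).trans (card_blockA N1 N2).le,
      (card_filter_le _ _).trans (card_blockB N1 N2).le⟩
  have hfiber : ∀ k ∈ range (N1 + 1) ×ˢ range (N2 + 1),
      ∑ σ with count σ = k, exp (-ham J11 J12 J22 h1 h2 N1 N2 σ) ≤
        exp ((N1 + N2 : ℕ) * S) := by
    rintro ⟨k1, k2⟩ hk
    simp only [mem_product, mem_range, Nat.lt_succ_iff] at hk
    refine (sum_exp_neg_ham_le_of_magnetization J11 J12 J22 h1 h2 (by omega) _
      ((2 * k1 - N1) / N1) ((2 * k2 - N2) / N2) fun σ hσ => ?_).trans ?_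
    · simp only [count, mem_filter, mem_univ, true_and, Prod.mk.injEq] at hσ
      rw [magA, magB, sum_spin_eq_two_mul_card_sub_card, sum_spin_eq_two_mul_card_sub_card,
        hσ.1, hσ.2, card_blockA, card_blockB]
      constructor <;> field_simp
    · gcongr
      exact hS _ (two_mul_sub_div_mem_Icc hN1 hk.1) _ (two_mul_sub_div_mem_Icc hN2 hk.2)
  calc ∑ σ, exp (-ham J11 J12 J22 h1 h2 N1 N2 σ)
      = ∑ k ∈ range (N1 + 1) ×ˢ range (N2 + 1),
          ∑ σ with count σ = k, exp (-ham J11 J12 J22 h1 h2 N1 N2 σ) :=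
        (sum_fiberwise_of_maps_to hcount _).symm
    _ ≤ ∑ k ∈ range (N1 + 1) ×ˢ range (N2 + 1), exp ((N1 + N2 : ℕ) * S) :=
        sum_le_sum hfiber
    _ = (N1 + 1) * (N2 + 1) * exp ((N1 + N2 : ℕ) * S) := by
        simp [sum_const, card_product, mul_assoc]

theorem bddAbove_pUP_image (α : ℝ) :
    BddAbove ((fun μ : ℝ × ℝ => pUP J11 J12 J22 h1 h2 α μ.1 μ.2) ''
      (Set.Icc (-1 : ℝ) 1 ×ˢ Set.Icc (-1 : ℝ) 1)) :=
  ((isCompact_Icc.prod isCompact_Icc).image <| by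
    unfold pUP
    fun_prop (disch := exact fun _ => (cosh_pos _).ne')).bddAbove

end BipartiteMeanField

theorem pressure_finite_volume_upper_bound_general
    (J11 J12 J22 h1 h2 : ℝ)
    (N1 N2 : ℕ) (hN1 : 0 < N1) (hN2 : 0 < N2) :
    pressure J11 J12 J22 h1 h2 N1 N2 ≤
      (1 / ((N1 + N2 : ℕ) : ℝ)) * Real.log ((N1 : ℝ) + 1) +
      (1 / ((N1 + N2 : ℕ) : ℝ)) * Real.log ((N2 : ℝ) + 1) +
      sSup ((fun μ : ℝ × ℝ =>
          pUP J11 J12 J22 h1 h2 ((N1 : ℝ) / ((N1 + N2 : ℕ) : ℝ)) μ.1 μ.2) ''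
        (Set.Icc (-1 : ℝ) 1 ×ˢ Set.Icc (-1 : ℝ) 1)) := by
  set S := sSup ((fun μ : ℝ × ℝ =>
    pUP J11 J12 J22 h1 h2 ((N1 : ℝ) / ((N1 + N2 : ℕ) : ℝ)) μ.1 μ.2) ''
      (Set.Icc (-1 : ℝ) 1 ×ˢ Set.Icc (-1 : ℝ) 1))
  have hZ := BipartiteMeanField.sum_exp_neg_ham_le J11 J12 J22 h1 h2 hN1 hN2
    fun μ1 hμ1 μ2 hμ2 =>
      le_csSup (BipartiteMeanField.bddAbove_pUP_image ..) ⟨(μ1, μ2), ⟨hμ1, hμ2⟩, rfl⟩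
  calc pressure J11 J12 J22 h1 h2 N1 N2
      ≤ 1 / ((N1 + N2 : ℕ) : ℝ) * log ((N1 + 1) * (N2 + 1) * exp ((N1 + N2 : ℕ) * S)) := by
        rw [pressure]
        gcongr
    _ = _ := by
        rw [log_mul (by positivity) (exp_ne_zero _), log_mul (by positivity) (by positivity),
          log_exp]
        field_simp

/-- finite-volume upper bound for the pressure, with `α = N1/N`. -/
theorem pressure_finite_volume_upper_bound
    (J11 J12 J22 h1 h2 : ℝ) (hJ11 : 0 < J11) (hJ22 : 0 < J22)
    (N1 N2 : ℕ) (hN1 : 0 < N1) (hN2 : 0 < N2) :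
    pressure J11 J12 J22 h1 h2 N1 N2 ≤
      (1 / ((N1 + N2 : ℕ) : ℝ)) * Real.log ((N1 : ℝ) + 1) +
      (1 / ((N1 + N2 : ℕ) : ℝ)) * Real.log ((N2 : ℝ) + 1) +
      sSup ((fun μ : ℝ × ℝ =>
          pUP J11 J12 J22 h1 h2 ((N1 : ℝ) / ((N1 + N2 : ℕ) : ℝ)) μ.1 μ.2) ''
        (Set.Icc (-1 : ℝ) 1 ×ˢ Set.Icc (-1 : ℝ) 1)) :=
  pressure_finite_volume_upper_bound_general J11 J12 J22 h1 h2 N1 N2 hN1 hN2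
end

section
/- Lower bound for the pressure: liminf_{N→∞} p_N ≥ sup_{(μ1,μ2) ∈ [−1,1]²} p_LOW(μ1, μ2). -/
open Real Filter

/-- Binary entropy term; `Real.log 0 = 0` gives the continuous extension `I(±1) = 0`. -/
noncomputable def entI (μ : ℝ) : ℝ :=
  -((1 + μ) / 2) * Real.log ((1 + μ) / 2) - ((1 - μ) / 2) * Real.log ((1 - μ) / 2)

/-- The lower-bound variational functional `p_LOW`. -/
noncomputable def pLOW (J11 J12 J22 h1 h2 α μ1 μ2 : ℝ) : ℝ :=
  (1 / 2) * (J11 * α ^ 2 * μ1 ^ 2 + 2 * J12 * α * (1 - α) * μ1 * μ2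
      + J22 * (1 - α) ^ 2 * μ2 ^ 2)
    + α * h1 * μ1 + (1 - α) * h2 * μ2 + α * entI μ1 + (1 - α) * entI μ2

/-!
By the Gibbs variational principle, `log Z ≥ E_ρ[-H] + S(ρ)` for every probability `ρ` on spin
configurations. Testing it on the product measure whose spins have mean `μ1` on `A` and `μ2` on
`B` gives `p_N ≥ p_LOW(N1 / N, μ1, μ2) + O(1 / N)`, the error being the self-interaction of the
diagonal terms `i = j`. As `N1 / N → α` and `p_N` is bounded above, the liminf of `p_N` dominates
`p_LOW(α, μ1, μ2)` for every `(μ1, μ2)` in the closed square.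
-/

open Finset Topology

section Gibbs

variable {α : Type*} [Fintype α]

theorem sum_mul_sub_log_le_log_sum_exp (ρ x : α → ℝ) (hρ : ∀ a, 0 ≤ ρ a) (hρ1 : ∑ a, ρ a = 1) :
    ∑ a, ρ a * (x a - log (ρ a)) ≤ log (∑ a, exp (x a)) := by
  set Z := ∑ a, exp (x a)
  have hZ : 0 < Z := by
    obtain ⟨a, -, -⟩ := exists_ne_zero_of_sum_ne_zero (hρ1.symm ▸ one_ne_zero)
    exact sum_pos (fun a _ => exp_pos _) ⟨a, mem_univ a⟩
  -- `log y ≤ y - 1` at `y = exp (x a) / (ρ a * Z)`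
  have key : ∀ a, ρ a * (x a - log (ρ a)) ≤ ρ a * log Z + (exp (x a) / Z - ρ a) := by
    intro a
    rcases (hρ a).eq_or_lt with h | h
    · rw [← h, zero_mul, zero_mul, zero_add, sub_zero]
      positivity
    have hlog := log_le_sub_one_of_pos (show 0 < exp (x a) / (ρ a * Z) by positivity)
    rw [log_div (exp_pos _).ne' (by positivity), log_mul h.ne' hZ.ne', log_exp] at hlog
    calc ρ a * (x a - log (ρ a)) = ρ a * log Z + ρ a * (x a - (log (ρ a) + log Z)) := by ring
      _ ≤ ρ a * log Z + ρ a * (exp (x a) / (ρ a * Z) - 1) := by gcongr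
      _ = ρ a * log Z + (exp (x a) / Z - ρ a) := by field_simp
  calc ∑ a, ρ a * (x a - log (ρ a))
      ≤ ∑ a, (ρ a * log Z + (exp (x a) / Z - ρ a)) := sum_le_sum fun a _ => key a
    _ = log Z := by
      rw [sum_add_distrib, ← sum_mul, sum_sub_distrib, ← sum_div, hρ1, div_self hZ.ne']
      ring

theorem log_sum_exp_le [Nonempty α] (x : α → ℝ) {M : ℝ} (hx : ∀ a, x a ≤ M) :
    log (∑ a, exp (x a)) ≤ log (Fintype.card α) + M := by
  calc log (∑ a, exp (x a)) ≤ log (Fintype.card α * exp M) := by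
        gcongr
        simpa using sum_le_sum fun a (_ : a ∈ univ) => exp_le_exp.2 (hx a)
    _ = log (Fintype.card α) + M := by
        rw [log_mul (by simp) (exp_pos M).ne', log_exp]

end Gibbs

section ProductMeasure

noncomputable def bernWeight (μ : ℝ) (b : Bool) : ℝ := (1 + μ * spin b) / 2

theorem bernWeight_nonneg {μ : ℝ} (hμ : μ ∈ Set.Icc (-1 : ℝ) 1) (b : Bool) :
    0 ≤ bernWeight μ b := by
  cases b <;> simp [bernWeight, spin] <;> linarith [hμ.1, hμ.2]

theorem sum_bernWeight (μ : ℝ) : ∑ b, bernWeight μ b = 1 := by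
  simp [bernWeight, spin]; ring

theorem sum_bernWeight_mul_spin (μ : ℝ) : ∑ b, bernWeight μ b * spin b = μ := by
  simp [bernWeight, spin]; ring

theorem sum_bernWeight_mul_log (μ : ℝ) :
    ∑ b, bernWeight μ b * log (bernWeight μ b) = -entI μ := by
  simp [bernWeight, spin, entI, ← sub_eq_add_neg]; ring

theorem spin_mul_self (b : Bool) : spin b * spin b = 1 := by
  cases b <;> simp [spin]

variable {ι : Type*} [Fintype ι] [DecidableEq ι]

noncomputable def prodWeight (m : ι → ℝ) (σ : ι → Bool) : ℝ := ∏ i, bernWeight (m i) (σ i)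

theorem sum_prodWeight_mul_prod (m : ι → ℝ) (f : ι → Bool → ℝ) :
    ∑ σ, prodWeight m σ * ∏ i, f i (σ i) = ∏ i, ∑ b, bernWeight (m i) b * f i b := by
  simp only [prodWeight, ← prod_mul_distrib, Fintype.prod_sum]

theorem sum_prodWeight (m : ι → ℝ) : ∑ σ, prodWeight m σ = 1 := by
  simpa only [prod_const_one, mul_one, sum_bernWeight] using
    sum_prodWeight_mul_prod m (fun _ _ => 1)

theorem sum_prodWeight_mul_apply (m : ι → ℝ) (i : ι) (g : Bool → ℝ) :
    ∑ σ, prodWeight m σ * g (σ i) = ∑ b, bernWeight (m i) b * g b := by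
  have h := sum_prodWeight_mul_prod m (fun k b => if k = i then g b else 1)
  have factor : ∀ k, ∑ b, bernWeight (m k) b * (if k = i then g b else 1)
      = if k = i then ∑ b, bernWeight (m i) b * g b else 1 := by
    intro k
    split_ifs with hk
    · rw [hk]
    · simp only [mul_one, sum_bernWeight]
  rw [prod_congr rfl fun k _ => factor k, Fintype.prod_ite_eq'] at h
  simpa only [ite_apply, Fintype.prod_ite_eq'] using h

theorem sum_prodWeight_mul_apply_mul_apply (m : ι → ℝ) {i j : ι} (hij : i ≠ j)
    (g₁ g₂ : Bool → ℝ) :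
    ∑ σ, prodWeight m σ * (g₁ (σ i) * g₂ (σ j))
      = (∑ b, bernWeight (m i) b * g₁ b) * ∑ b, bernWeight (m j) b * g₂ b := by
  have h := sum_prodWeight_mul_prod m
    (fun k b => (if k = i then g₁ b else 1) * (if k = j then g₂ b else 1))
  have factor : ∀ k, ∑ b, bernWeight (m k) b * ((if k = i then g₁ b else 1) *
        (if k = j then g₂ b else 1))
      = (if k = i then ∑ b, bernWeight (m i) b * g₁ b else 1) *
        (if k = j then ∑ b, bernWeight (m j) b * g₂ b else 1) := by
    intro k
    by_cases hi : k = i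
    · subst hi; simp [hij]
    · by_cases hj : k = j
      · subst hj; simp [hi]
      · simp only [hi, hj, if_false, mul_one, sum_bernWeight]
  rw [prod_congr rfl fun k _ => factor k, prod_mul_distrib, Fintype.prod_ite_eq',
    Fintype.prod_ite_eq'] at h
  simpa only [prod_mul_distrib, Fintype.prod_ite_eq'] using h

theorem sum_prodWeight_mul_spin (m : ι → ℝ) (i : ι) :
    ∑ σ, prodWeight m σ * spin (σ i) = m i := by
  rw [sum_prodWeight_mul_apply m i spin, sum_bernWeight_mul_spin]

theorem sum_prodWeight_mul_spin_mul_spin (m : ι → ℝ) (i j : ι) :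
    ∑ σ, prodWeight m σ * (spin (σ i) * spin (σ j)) = if i = j then 1 else m i * m j := by
  split_ifs with hij
  · simp [hij, spin_mul_self, sum_prodWeight]
  · rw [sum_prodWeight_mul_apply_mul_apply m hij, sum_bernWeight_mul_spin,
      sum_bernWeight_mul_spin]

theorem sum_prodWeight_mul_log (m : ι → ℝ) :
    ∑ σ, prodWeight m σ * log (prodWeight m σ) = -∑ i, entI (m i) := by
  -- `log` of a vanishing product is junk, but then the factor `prodWeight m σ` kills it
  have hlog : ∀ σ, prodWeight m σ * log (prodWeight m σ)
      = ∑ i, prodWeight m σ * log (bernWeight (m i) (σ i)) := by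
    intro σ
    rw [← mul_sum]
    by_cases h : prodWeight m σ = 0
    · simp [h]
    · rw [prodWeight, log_prod fun i _ => ?_]
      exact prod_ne_zero_iff.1 h i (mem_univ i)
  simp only [hlog]
  rw [sum_comm, ← sum_neg_distrib]
  refine sum_congr rfl fun i _ => ?_
  rw [sum_prodWeight_mul_apply m i (fun b => log (bernWeight (m i) b)), sum_bernWeight_mul_log]

end ProductMeasure

section MeanField

variable {ι : Type*} [Fintype ι]

/-- Minus the Hamiltonian with couplings `K` and fields `h`, at real spin values `x`. -/
def quadEnergy (K : ι → ι → ℝ) (h x : ι → ℝ) : ℝ :=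
  ∑ i, ∑ j, K i j * x i * x j + ∑ i, h i * x i

theorem quadEnergy_le_of_abs_le_one (K : ι → ι → ℝ) (h : ι → ℝ) {x : ι → ℝ}
    (hx : ∀ i, |x i| ≤ 1) :
    quadEnergy K h x ≤ ∑ i, ∑ j, |K i j| + ∑ i, |h i| := by
  have hxx : ∀ i j, |x i * x j| ≤ 1 := fun i j => by
    rw [abs_mul]; exact mul_le_one₀ (hx i) (abs_nonneg _) (hx j)
  unfold quadEnergy
  gcongr with i _ j _ i
  · rw [mul_assoc]
    refine (le_abs_self _).trans ?_
    rw [abs_mul]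
    exact mul_le_of_le_one_right (abs_nonneg _) (hxx i j)
  · refine (le_abs_self _).trans ?_
    rw [abs_mul]
    exact mul_le_of_le_one_right (abs_nonneg _) (hx i)

variable [DecidableEq ι]

noncomputable def partitionFunction (K : ι → ι → ℝ) (h : ι → ℝ) : ℝ :=
  ∑ σ : ι → Bool, exp (quadEnergy K h fun i => spin (σ i))

theorem log_partitionFunction_le (K : ι → ι → ℝ) (h : ι → ℝ) :
    log (partitionFunction K h)
      ≤ Fintype.card ι * log 2 + (∑ i, ∑ j, |K i j| + ∑ i, |h i|) := by
  have hspin : ∀ (σ : ι → Bool) i, |spin (σ i)| ≤ 1 := fun σ i => by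
    cases σ i <;> simp [spin]
  refine (log_sum_exp_le _ fun σ => quadEnergy_le_of_abs_le_one K h (hspin σ)).trans_eq ?_
  simp [log_pow]

theorem sum_prodWeight_mul_quadEnergy (K : ι → ι → ℝ) (h m : ι → ℝ) :
    ∑ σ, prodWeight m σ * quadEnergy K h (fun i => spin (σ i))
      = quadEnergy K h m + ∑ i, K i i * (1 - m i ^ 2) := by
  have pair : ∀ i j, ∑ σ, prodWeight m σ * (K i j * spin (σ i) * spin (σ j))
      = K i j * m i * m j + if i = j then K i i * (1 - m i ^ 2) else 0 := by
    intro i j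
    simp_rw [mul_assoc (K i j), mul_left_comm _ (K i j), ← mul_sum,
      sum_prodWeight_mul_spin_mul_spin]
    split_ifs with hij
    · subst hij; ring
    · ring
  have single : ∀ i, ∑ σ, prodWeight m σ * (h i * spin (σ i)) = h i * m i := by
    intro i
    simp_rw [mul_left_comm _ (h i), ← mul_sum, sum_prodWeight_mul_spin]
  calc ∑ σ, prodWeight m σ * quadEnergy K h (fun i => spin (σ i))
      = ∑ i, ∑ j, ∑ σ, prodWeight m σ * (K i j * spin (σ i) * spin (σ j))
        + ∑ i, ∑ σ, prodWeight m σ * (h i * spin (σ i)) := by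
        simp only [quadEnergy, mul_add, mul_sum, sum_add_distrib]
        congr 1
        · rw [sum_comm]; exact sum_congr rfl fun i _ => sum_comm
        · exact sum_comm
    _ = quadEnergy K h m + ∑ i, K i i * (1 - m i ^ 2) := by
        simp only [pair, single, sum_add_distrib, sum_ite_eq, mem_univ, if_true, quadEnergy]
        ring

/-- The naive mean-field lower bound: the Gibbs variational principle tested on the product
measure with means `m`. -/
theorem quadEnergy_add_sum_entI_le_log_partitionFunction (K : ι → ι → ℝ) (h : ι → ℝ)
    {m : ι → ℝ} (hm : ∀ i, m i ∈ Set.Icc (-1 : ℝ) 1) :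
    quadEnergy K h m + ∑ i, K i i * (1 - m i ^ 2) + ∑ i, entI (m i)
      ≤ log (partitionFunction K h) := by
  have gibbs := sum_mul_sub_log_le_log_sum_exp (prodWeight m)
    (fun σ => quadEnergy K h fun i => spin (σ i))
    (fun σ => prod_nonneg fun i _ => bernWeight_nonneg (hm i) _) (sum_prodWeight m)
  simp_rw [mul_sub] at gibbs
  rwa [sum_sub_distrib, sum_prodWeight_mul_quadEnergy, sum_prodWeight_mul_log,
    sub_neg_eq_add] at gibbs

end MeanField

theorem Fin.not_le_val {n : ℕ} (i : Fin n) : ¬n ≤ (i : ℕ) := not_le.2 i.isLt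

section Bipartite

variable (J11 J12 J22 h1 h2 : ℝ) (N1 N2 : ℕ)

noncomputable def bipartiteCoupling (i j : Fin (N1 + N2)) : ℝ :=
  (1 / (2 * ((N1 + N2 : ℕ) : ℝ))) *
    ((if (i : ℕ) < N1 ∧ (j : ℕ) < N1 then J11 else 0)
      + (if (i : ℕ) < N1 ∧ N1 ≤ (j : ℕ) then 2 * J12 else 0)
      + (if N1 ≤ (i : ℕ) ∧ N1 ≤ (j : ℕ) then J22 else 0))

def bipartiteField (i : Fin (N1 + N2)) : ℝ := if (i : ℕ) < N1 then h1 else h2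

def blockMean (μ1 μ2 : ℝ) (i : Fin (N1 + N2)) : ℝ := if (i : ℕ) < N1 then μ1 else μ2

theorem neg_ham_eq_quadEnergy (σ : Fin (N1 + N2) → Bool) :
    -ham J11 J12 J22 h1 h2 N1 N2 σ
      = quadEnergy (bipartiteCoupling J11 J12 J22 N1 N2) (bipartiteField h1 h2 N1 N2)
          (fun i => spin (σ i)) := by
  set c : ℝ := 1 / (2 * ((N1 + N2 : ℕ) : ℝ))
  set x : Fin (N1 + N2) → ℝ := fun i => spin (σ i)
  have coupling : ∀ i j, bipartiteCoupling J11 J12 J22 N1 N2 i j * x i * x j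
        = c * J11 * (if (i : ℕ) < N1 ∧ (j : ℕ) < N1 then x i * x j else 0)
          + c * (2 * J12) * (if (i : ℕ) < N1 ∧ N1 ≤ (j : ℕ) then x i * x j else 0)
          + c * J22 * (if N1 ≤ (i : ℕ) ∧ N1 ≤ (j : ℕ) then x i * x j else 0) := by
    intro i j
    simp only [bipartiteCoupling, c]
    split_ifs <;> ring
  have field : ∀ i, bipartiteField h1 h2 N1 N2 i * x i
      = h1 * (if (i : ℕ) < N1 then x i else 0) + h2 * (if N1 ≤ (i : ℕ) then x i else 0) := by
    intro i
    simp only [bipartiteField]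
    split_ifs <;> first | (exfalso; omega) | ring
  simp only [quadEnergy, coupling, field, sum_add_distrib, ← mul_sum, ham, c, x]
  ring

theorem quadEnergy_blockMean (μ1 μ2 : ℝ) :
    quadEnergy (bipartiteCoupling J11 J12 J22 N1 N2) (bipartiteField h1 h2 N1 N2)
        (blockMean N1 N2 μ1 μ2)
      = (1 / (2 * ((N1 + N2 : ℕ) : ℝ))) * (J11 * N1 ^ 2 * μ1 ^ 2 + 2 * J12 * N1 * N2 * μ1 * μ2
          + J22 * N2 ^ 2 * μ2 ^ 2) + h1 * N1 * μ1 + h2 * N2 * μ2 := by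
  simp [quadEnergy, bipartiteCoupling, bipartiteField, blockMean, Fin.sum_univ_add,
    Fin.not_le_val]
  ring

theorem sum_diag_blockMean (μ1 μ2 : ℝ) :
    ∑ i, bipartiteCoupling J11 J12 J22 N1 N2 i i * (1 - blockMean N1 N2 μ1 μ2 i ^ 2)
      = (1 / (2 * ((N1 + N2 : ℕ) : ℝ)))
          * (J11 * N1 * (1 - μ1 ^ 2) + J22 * N2 * (1 - μ2 ^ 2)) := by
  simp [bipartiteCoupling, blockMean, Fin.sum_univ_add, Fin.not_le_val]
  ring

theorem sum_entI_blockMean (μ1 μ2 : ℝ) :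
    ∑ i, entI (blockMean N1 N2 μ1 μ2 i) = N1 * entI μ1 + N2 * entI μ2 := by
  simp [blockMean, Fin.sum_univ_add]

end Bipartite

section Pressure

variable {J11 J12 J22 h1 h2 : ℝ} {N1 N2 : ℕ}

theorem pressure_eq_log_partitionFunction :
    pressure J11 J12 J22 h1 h2 N1 N2
      = (1 / ((N1 + N2 : ℕ) : ℝ)) *
          log (partitionFunction (bipartiteCoupling J11 J12 J22 N1 N2)
            (bipartiteField h1 h2 N1 N2)) := by
  simp only [pressure, partitionFunction, neg_ham_eq_quadEnergy]

/-- The `1 / N` term is the self-interaction of the diagonal couplings `i = j`. -/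
theorem pLOW_add_le_pressure {μ1 μ2 : ℝ} (hμ1 : μ1 ∈ Set.Icc (-1 : ℝ) 1)
    (hμ2 : μ2 ∈ Set.Icc (-1 : ℝ) 1) (hN : 0 < N1 + N2) :
    pLOW J11 J12 J22 h1 h2 (N1 / ((N1 + N2 : ℕ) : ℝ)) μ1 μ2
        + 1 / ((N1 + N2 : ℕ) : ℝ) * ((J11 * (N1 / ((N1 + N2 : ℕ) : ℝ)) * (1 - μ1 ^ 2)
          + J22 * (1 - N1 / ((N1 + N2 : ℕ) : ℝ)) * (1 - μ2 ^ 2)) / 2)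
      ≤ pressure J11 J12 J22 h1 h2 N1 N2 := by
  have hm : ∀ i, blockMean N1 N2 μ1 μ2 i ∈ Set.Icc (-1 : ℝ) 1 := fun i => by
    unfold blockMean; split_ifs <;> assumption
  have key := quadEnergy_add_sum_entI_le_log_partitionFunction
    (bipartiteCoupling J11 J12 J22 N1 N2) (bipartiteField h1 h2 N1 N2) hm
  rw [quadEnergy_blockMean, sum_diag_blockMean, sum_entI_blockMean] at key
  rw [pressure_eq_log_partitionFunction]
  refine le_of_eq_of_le ?_ (mul_le_mul_of_nonneg_left key (by positivity))
  have hN' : (N1 : ℝ) + N2 ≠ 0 := by exact_mod_cast hN.ne'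
  simp only [pLOW]
  push_cast
  field_simp
  ring

theorem pressure_le (hN : 0 < N1 + N2) :
    pressure J11 J12 J22 h1 h2 N1 N2
      ≤ log 2 + ((|J11| + 2 * |J12| + |J22|) / 2 + (|h1| + |h2|)) := by
  set n : ℝ := ((N1 + N2 : ℕ) : ℝ)
  have hn : 0 < n := by positivity
  have hK : ∀ i j, |bipartiteCoupling J11 J12 J22 N1 N2 i j|
      ≤ 1 / (2 * n) * (|J11| + |2 * J12| + |J22|) := by
    intro i j
    rw [bipartiteCoupling, abs_mul, abs_of_pos (by positivity)]
    gcongr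
    refine (abs_add_three _ _ _).trans (add_le_add_three ?_ ?_ ?_) <;> split_ifs <;> simp
  have hh : ∀ i, |bipartiteField h1 h2 N1 N2 i| ≤ |h1| + |h2| := by
    intro i
    unfold bipartiteField
    split_ifs <;> simp
  have hsum : ∑ i, ∑ j, |bipartiteCoupling J11 J12 J22 N1 N2 i j|
      + ∑ i, |bipartiteField h1 h2 N1 N2 i|
      ≤ n * ((|J11| + 2 * |J12| + |J22|) / 2 + (|h1| + |h2|)) := by
    calc _ ≤ ∑ _i : Fin (N1 + N2), ∑ _j : Fin (N1 + N2),
            1 / (2 * n) * (|J11| + |2 * J12| + |J22|) + ∑ _i : Fin (N1 + N2), (|h1| + |h2|) := by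
          gcongr with i _ j _ i
          exacts [hK i j, hh i]
      _ = n * ((|J11| + 2 * |J12| + |J22|) / 2 + (|h1| + |h2|)) := by
          simp only [sum_const, card_univ, Fintype.card_fin, nsmul_eq_mul, abs_mul, abs_two, n]
          field_simp
  rw [pressure_eq_log_partitionFunction, ← le_div_iff₀' (by positivity), div_eq_mul_inv]
  refine (log_partitionFunction_le _ _).trans ?_
  simp only [Fintype.card_fin, one_div, inv_inv]
  linarith [hsum]

end Pressure

theorem pLOW_le_liminf_pressure {J11 J12 J22 h1 h2 α μ1 μ2 : ℝ} (hα : α ∈ Set.Ioo (0 : ℝ) 1)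
    (hμ1 : μ1 ∈ Set.Icc (-1 : ℝ) 1) (hμ2 : μ2 ∈ Set.Icc (-1 : ℝ) 1) :
    pLOW J11 J12 J22 h1 h2 α μ1 μ2
      ≤ liminf (fun N : ℕ => pressure J11 J12 J22 h1 h2 ⌊α * N⌋₊ (N - ⌊α * N⌋₊)) atTop := by
  set r : ℕ → ℝ := fun N => (⌊α * N⌋₊ : ℝ) / N
  set lower : ℝ → ℝ → ℝ := fun t ε => pLOW J11 J12 J22 h1 h2 t μ1 μ2
    + ε * ((J11 * t * (1 - μ1 ^ 2) + J22 * (1 - t) * (1 - μ2 ^ 2)) / 2)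
  have hsplit : ∀ N : ℕ, ⌊α * N⌋₊ + (N - ⌊α * N⌋₊) = N := fun N =>
    Nat.add_sub_cancel' (Nat.floor_le_of_le (mul_le_of_le_one_left N.cast_nonneg hα.2.le))
  have hr : Tendsto r atTop (𝓝 α) :=
    (tendsto_nat_floor_mul_div_atTop hα.1.le).comp tendsto_natCast_atTop_atTop
  have hlim : Tendsto (fun N : ℕ => lower (r N) (1 / N)) atTop
      (𝓝 (pLOW J11 J12 J22 h1 h2 α μ1 μ2)) := by
    have hcont : Continuous fun p : ℝ × ℝ => lower p.1 p.2 := by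
      simp only [lower, pLOW]; fun_prop
    simpa [lower, Function.comp_def] using
      (hcont.tendsto (α, 0)).comp (hr.prodMk_nhds tendsto_one_div_atTop_nhds_zero_nat)
  have hle : ∀ᶠ N : ℕ in atTop,
      lower (r N) (1 / N) ≤ pressure J11 J12 J22 h1 h2 ⌊α * N⌋₊ (N - ⌊α * N⌋₊) := by
    filter_upwards [eventually_gt_atTop 0] with N hN
    have h := pLOW_add_le_pressure (J11 := J11) (J12 := J12) (J22 := J22) (h1 := h1) (h2 := h2)
      (N1 := ⌊α * N⌋₊) (N2 := N - ⌊α * N⌋₊) hμ1 hμ2 (by omega)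
    rwa [hsplit N] at h
  have hbdd : ∀ᶠ N : ℕ in atTop, pressure J11 J12 J22 h1 h2 ⌊α * N⌋₊ (N - ⌊α * N⌋₊)
      ≤ log 2 + ((|J11| + 2 * |J12| + |J22|) / 2 + (|h1| + |h2|)) := by
    filter_upwards [eventually_gt_atTop 0] with N hN
    exact pressure_le (by omega)
  rw [← hlim.liminf_eq]
  exact liminf_le_liminf hle hlim.isBoundedUnder_ge
    (isCoboundedUnder_ge_of_eventually_le _ hbdd)

theorem pressure_liminf_ge_sup_pLOW_general
    (J11 J12 J22 h1 h2 α : ℝ)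
    (hα : α ∈ Set.Ioo (0 : ℝ) 1) :
    Filter.liminf
      (fun N : ℕ =>
        pressure J11 J12 J22 h1 h2 ⌊α * (N : ℝ)⌋₊ (N - ⌊α * (N : ℝ)⌋₊))
      Filter.atTop ≥
      sSup ((fun μ : ℝ × ℝ => pLOW J11 J12 J22 h1 h2 α μ.1 μ.2) ''
        (Set.Icc (-1 : ℝ) 1 ×ˢ Set.Icc (-1 : ℝ) 1)) := by
  refine csSup_le (Set.Nonempty.image _ ⟨(0, 0), by norm_num, by norm_num⟩) ?_
  rintro _ ⟨⟨μ1, μ2⟩, ⟨hμ1, hμ2⟩, rfl⟩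
  exact pLOW_le_liminf_pressure hα hμ1 hμ2

/-- lower bound for the limiting pressure. -/
theorem pressure_liminf_ge_sup_pLOW
    (J11 J12 J22 h1 h2 α : ℝ) (hJ11 : 0 < J11) (hJ22 : 0 < J22)
    (hα : α ∈ Set.Ioo (0 : ℝ) 1) :
    Filter.liminf
      (fun N : ℕ =>
        pressure J11 J12 J22 h1 h2 ⌊α * (N : ℝ)⌋₊ (N - ⌊α * (N : ℝ)⌋₊))
      Filter.atTop ≥
      sSup ((fun μ : ℝ × ℝ => pLOW J11 J12 J22 h1 h2 α μ.1 μ.2) ''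
        (Set.Icc (-1 : ℝ) 1 ×ˢ Set.Icc (-1 : ℝ) 1)) :=
  pressure_liminf_ge_sup_pLOW_general J11 J12 J22 h1 h2 α hα
end
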